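/- Let G be a graph. Then: (i) if G has a vertex of degree k with k≥2, then l(G) ≥ k−1; (ii) if G contains a subgraph that is a tree with k leaves, where k≥2, then l(G) ≥ k−1. -/

import Mathlib

/-- The transformation of `{1,…,n}` sending `a` to `b` and fixing all other points. -/
def arcT {n : ℕ} (a b : Fin n) : Fin n → Fin n := fun v => if v = a then b else v

/-- The semigroup `⟨D⟩` generated by the arcs of the digraph `D`; transformations act on
the right, so a product `ε₁ε₂⋯ε_k` is the function `ε_k ∘ ⋯ ∘ ε₁`. -/
def genSg {n : ℕ} (D : Set (Fin n × Fin n)) : Set (Fin n → Fin n) :=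
  { α | ∃ l : List (Fin n × Fin n), l ≠ [] ∧ (∀ p ∈ l, p ∈ D) ∧
      α = l.foldl (fun f p => arcT p.1 p.2 ∘ f) id }

/-- The product `x·y` in the right-action convention: apply `x` first, then `y`. -/
def sgMul {n : ℕ} (x y : Fin n → Fin n) : Fin n → Fin n := y ∘ x

/-- The right ideal `xS¹ = {x} ∪ xS`. -/
def rIdeal {n : ℕ} (S : Set (Fin n → Fin n)) (x : Fin n → Fin n) : Set (Fin n → Fin n) :=
  insert x { y | ∃ s ∈ S, y = sgMul x s }

/-- The left ideal `S¹x = {x} ∪ Sx`. -/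
def lIdeal {n : ℕ} (S : Set (Fin n → Fin n)) (x : Fin n → Fin n) : Set (Fin n → Fin n) :=
  insert x { y | ∃ s ∈ S, y = sgMul s x }

/-- The two-sided ideal `S¹xS¹`. -/
def jIdeal {n : ℕ} (S : Set (Fin n → Fin n)) (x : Fin n → Fin n) : Set (Fin n → Fin n) :=
  { y | ∃ s ∈ insert id S, ∃ t ∈ insert id S, y = sgMul s (sgMul x t) }

def RRel {n : ℕ} (S : Set (Fin n → Fin n)) (x y : Fin n → Fin n) : Prop :=
  rIdeal S x = rIdeal S y

def LRel {n : ℕ} (S : Set (Fin n → Fin n)) (x y : Fin n → Fin n) : Prop :=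
  lIdeal S x = lIdeal S y

def JRel {n : ℕ} (S : Set (Fin n → Fin n)) (x y : Fin n → Fin n) : Prop :=
  jIdeal S x = jIdeal S y

def RTrivial {n : ℕ} (S : Set (Fin n → Fin n)) : Prop :=
  ∀ x ∈ S, ∀ y ∈ S, RRel S x y → x = y

def LTrivial {n : ℕ} (S : Set (Fin n → Fin n)) : Prop :=
  ∀ x ∈ S, ∀ y ∈ S, LRel S x y → x = y

def HTrivial {n : ℕ} (S : Set (Fin n → Fin n)) : Prop :=
  ∀ x ∈ S, ∀ y ∈ S, RRel S x y → LRel S x y → x = y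

def JTrivial {n : ℕ} (S : Set (Fin n → Fin n)) : Prop :=
  ∀ x ∈ S, ∀ y ∈ S, JRel S x y → x = y

/-- `α` has a cycle of length `k`: `k` distinct points `a₀,…,a_{k-1}` with
`α(aᵢ) = a_{i+1 mod k}`. -/
def IsCycleOf {n : ℕ} (α : Fin n → Fin n) (k : ℕ) : Prop :=
  0 < k ∧ ∃ a : ZMod k → Fin n, Function.Injective a ∧ ∀ i, α (a i) = a (i + 1)

/-- `l(D)`: the maximal length of a cycle of an element of `⟨D⟩`. -/
noncomputable def lD {n : ℕ} (D : Set (Fin n × Fin n)) : ℕ :=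
  sSup { k | ∃ α ∈ genSg D, IsCycleOf α k }

/-- The arc set of a graph. -/
def arcsOf {n : ℕ} (G : SimpleGraph (Fin n)) : Set (Fin n × Fin n) :=
  { p | G.Adj p.1 p.2 }

/-- `l(G)` for a graph `G`. -/
noncomputable def lG {n : ℕ} (G : SimpleGraph (Fin n)) : ℕ := lD (arcsOf G)

/-- Reachability along directed walks of `D`. -/
def dreach {n : ℕ} (D : Set (Fin n × Fin n)) : Fin n → Fin n → Prop :=
  Relation.ReflTransGen (fun a b => (a, b) ∈ D)

/-- The strong component of the vertex `v`. -/
def strongComp {n : ℕ} (D : Set (Fin n × Fin n)) (v : Fin n) : Set (Fin n) :=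
  { u | dreach D u v ∧ dreach D v u }

/-- The underlying graph of the digraph `D`. -/
def underlying {n : ℕ} (D : Set (Fin n × Fin n)) : SimpleGraph (Fin n) where
  Adj a b := a ≠ b ∧ ((a, b) ∈ D ∨ (b, a) ∈ D)
  symm := ⟨fun a b h => ⟨h.1.symm, h.2.symm⟩⟩
  loopless := ⟨fun a h => h.1 rfl⟩

/-- `v 0, v 1, …, v r` is a cycle of the digraph `D`. -/
def IsDCycle {n : ℕ} (D : Set (Fin n × Fin n)) (r : ℕ) (v : ℕ → Fin n) : Prop :=
  1 ≤ r ∧ v r = v 0 ∧ (∀ i < r, ∀ j < r, v i = v j → i = j) ∧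
    ∀ i < r, (v i, v (i + 1)) ∈ D

def HasDCycle {n : ℕ} (D : Set (Fin n × Fin n)) : Prop := ∃ r v, IsDCycle D r v

def DAcyclic {n : ℕ} (D : Set (Fin n × Fin n)) : Prop := ¬ HasDCycle D

/-- `G` is a subgroup contained in the transformation semigroup `S`. -/
def IsSubgroupIn {n : ℕ} (S G : Set (Fin n → Fin n)) : Prop :=
  G ⊆ S ∧ (∀ x ∈ G, ∀ y ∈ G, sgMul x y ∈ G) ∧
    ∃ e ∈ G, (∀ x ∈ G, sgMul e x = x ∧ sgMul x e = x) ∧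
      ∀ x ∈ G, ∃ y ∈ G, sgMul x y = e ∧ sgMul y x = e

/-- Every subgroup of `S` is trivial. -/
def SgAperiodic {n : ℕ} (S : Set (Fin n → Fin n)) : Prop :=
  ∀ G, IsSubgroupIn S G → G.Subsingleton

/-!
Regard the vertices of a set `T` as positions of tokens. If for any two positions `a ≠ b` of `T`
some element of `⟨D⟩` moves the token at `a` to `b` while leaving the other positions of `T`
fixed, then with `|T| = k` one position can serve as a hole: move the last of the remaining
`k - 1` tokens into the hole, shift every other token one position forward, and move the token in
the hole to the first position. The product is a `(k - 1)`-cycle on those tokens.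

In a graph, the product of the arcs `(p₀ → p₁), …, (p_{r-1} → p_r)` of a walk moves `p₀` to
`p_r` and fixes every vertex off the walk, so a walk between two positions whose inner vertices
avoid `T` gives such a move. For (i) take `T` the neighbours of `v` and the walks `a, v, b`;
for (ii) take `T` the leaves of the tree and its paths, whose inner vertices have two neighbours.
-/

section Semigroup
variable {n : ℕ}

lemma arcT_apply_self (a b : Fin n) : arcT a b a = b := by simp [arcT]

lemma arcT_apply_of_ne {a b v : Fin n} (h : v ≠ a) : arcT a b v = v := by simp [arcT, h]

lemma foldl_arcT_comp (l : List (Fin n × Fin n)) (f : Fin n → Fin n) :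
    l.foldl (fun g p => arcT p.1 p.2 ∘ g) f =
      l.foldl (fun g p => arcT p.1 p.2 ∘ g) id ∘ f := by
  induction l generalizing f with
  | nil => rfl
  | cons p l ih =>
    simp only [List.foldl_cons, ih (arcT p.1 p.2 ∘ f), ih (arcT p.1 p.2 ∘ id)]
    rfl

lemma arcT_mem_genSg {D : Set (Fin n × Fin n)} {a b : Fin n} (h : (a, b) ∈ D) :
    arcT a b ∈ genSg D :=
  ⟨[(a, b)], by simp, by simpa using h, rfl⟩

lemma comp_mem_genSg {D : Set (Fin n × Fin n)} {f g : Fin n → Fin n}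
    (hf : f ∈ genSg D) (hg : g ∈ genSg D) : g ∘ f ∈ genSg D := by
  obtain ⟨l₁, hl₁, hD₁, rfl⟩ := hf
  obtain ⟨l₂, -, hD₂, rfl⟩ := hg
  refine ⟨l₁ ++ l₂, by simp [hl₁], fun p hp => ?_, ?_⟩
  · rcases List.mem_append.mp hp with h | h
    exacts [hD₁ p h, hD₂ p h]
  · rw [List.foldl_append]
    exact (foldl_arcT_comp l₂ _).symm

lemma le_lD {D : Set (Fin n × Fin n)} {α : Fin n → Fin n} (hα : α ∈ genSg D) {k : ℕ}
    (hk : IsCycleOf α k) : k ≤ lD D := by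
  refine le_csSup ⟨n, fun m ⟨_, _, hm, a, ha, _⟩ => ?_⟩ ⟨α, hα, hk⟩
  have : NeZero m := ⟨hm.ne'⟩
  simpa [ZMod.card] using Fintype.card_le_of_injective a ha

lemma isCycleOf_length_of_isChain {α : Fin n → Fin n} {l : List (Fin n)} (hl : l.Nodup)
    (hne : l ≠ []) (hchain : l.IsChain (fun x y => α x = y))
    (hlast : α (l.getLast hne) = l.head hne) : IsCycleOf α l.length := by
  have hpos : 0 < l.length := List.length_pos_iff.mpr hne
  have : NeZero l.length := ⟨hpos.ne'⟩
  refine ⟨hpos, fun i => l[i.val]'(ZMod.val_lt i),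
    fun i j hij => ZMod.val_injective _ (hl.getElem_inj_iff.mp hij), fun i => ?_⟩
  have hi := ZMod.val_lt i
  have hval : (i + 1).val = (i.val + 1) % l.length := by
    rw [ZMod.val_add, ZMod.val_one_eq_one_mod, Nat.add_mod_mod]
  rcases Nat.lt_or_ge (i.val + 1) l.length with h | h
  · simp only [hval, Nat.mod_eq_of_lt h]
    exact List.isChain_iff_getElem.mp hchain _ h
  · have hlast' : i.val = l.length - 1 := by omega
    have hzero : (i + 1).val = 0 := by rw [hval, show i.val + 1 = l.length by omega, Nat.mod_self]
    simp only [hzero, hlast']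
    rw [← List.getLast_eq_getElem hne, ← List.head_eq_getElem hne]
    exact hlast

end Semigroup

section Tokens
variable {n : ℕ}

def CanSlide (D : Set (Fin n × Fin n)) (T : Set (Fin n)) (a b : Fin n) : Prop :=
  ∃ f ∈ genSg D, f a = b ∧ ∀ z ∈ T, z ≠ a → f z = z

variable {D : Set (Fin n × Fin n)} {T : Set (Fin n)}

theorem exists_mem_genSg_isChain (hslide : ∀ a ∈ T, ∀ b ∈ T, a ≠ b → CanSlide D T a b) :
    ∀ l : List (Fin n), l.Nodup → (∀ x ∈ l, x ∈ T) → 2 ≤ l.length →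
      ∃ c ∈ genSg D, l.IsChain (fun x y => c x = y) ∧ ∀ z ∈ T, z ∉ l → c z = z
  | [], _, _, h | [_], _, _, h => by simp at h
  | [a, b], hl, hT, _ => by
    obtain ⟨f, hf, hab, hfix⟩ :=
      hslide a (hT a (by simp)) b (hT b (by simp)) (by simpa using hl)
    exact ⟨f, hf, by simpa using hab, fun z hz hzl => hfix z hz (by grind)⟩
  | a :: b :: c :: l, hl, hT, _ => by
    obtain ⟨g, hg, hchain, hgfix⟩ := exists_mem_genSg_isChain hslide (b :: c :: l) hl.of_cons
      (fun x hx => hT x (.tail _ hx)) (by simp)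
    have ha : a ∉ b :: c :: l := (List.nodup_cons.mp hl).1
    obtain ⟨f, hf, hab, hffix⟩ := hslide a (hT a (by simp)) b (hT b (by simp)) (by grind)
    refine ⟨f ∘ g, comp_mem_genSg hg hf, List.isChain_cons_cons.mpr ⟨?_, ?_⟩,
      fun z hz hzl => ?_⟩
    · simp [hgfix a (hT a (by simp)) ha, hab]
    · refine hchain.imp_of_mem_imp fun x y _ hy hxy => ?_
      simp [hxy, hffix y (hT y (.tail _ hy)) (by grind)]
    · simp [hgfix z hz (by grind), hffix z hz (by grind)]

theorem ncard_sub_one_le_lD (hT : 2 ≤ T.ncard)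
    (hslide : ∀ a ∈ T, ∀ b ∈ T, a ≠ b → CanSlide D T a b) : T.ncard - 1 ≤ lD D := by
  set P := T.toFinite.toFinset.toList
  have hPlen : P.length = T.ncard := by simp [P, Set.ncard_eq_toFinset_card T]
  have hPT : ∀ x ∈ P, x ∈ T := by simp [P]
  have hPnodup : P.Nodup := Finset.nodup_toList _
  have hPne : P ≠ [] := List.ne_nil_of_length_pos (by omega)
  obtain ⟨c, hc, hchain, -⟩ :=
    exists_mem_genSg_isChain hslide P hPnodup hPT (by omega)
  -- `L` carries the tokens to be rotated, `h` is the hole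
  set L := P.dropLast
  set h := P.getLast hPne
  have hsplit : L ++ [h] = P := List.dropLast_append_getLast hPne
  have hLlen : L.length = T.ncard - 1 := by simp [L, hPlen]
  have hLne : L ≠ [] := List.ne_nil_of_length_pos (by omega)
  have hnodup : L.Nodup ∧ h ∉ L := by
    rw [← hsplit] at hPnodup
    simp only [List.nodup_append, List.nodup_singleton, List.mem_singleton] at hPnodup
    exact ⟨hPnodup.1, fun hh => hPnodup.2.2 h hh h rfl rfl⟩
  have hLT : ∀ x ∈ L, x ∈ T := fun x hx => hPT x (hsplit ▸ List.mem_append_left _ hx)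
  have hhT : h ∈ T := hPT h (List.getLast_mem hPne)
  rw [← hsplit, List.isChain_append] at hchain
  obtain ⟨hLchain, -, hlast⟩ := hchain
  obtain ⟨r, hr, hrh, hrfix⟩ := hslide h hhT (L.head hLne) (hLT _ (List.head_mem hLne))
    (fun e => hnodup.2 (e ▸ List.head_mem hLne))
  have hcycle : IsCycleOf (r ∘ c) L.length := by
    refine isCycleOf_length_of_isChain hnodup.1 hLne ?_ ?_
    · refine hLchain.imp_of_mem_imp fun x y _ hy hxy => ?_
      simp [hxy, hrfix y (hLT y hy) (fun e => hnodup.2 (e ▸ hy))]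
    · have : c (L.getLast hLne) = h := hlast _ (List.getLast?_eq_some_getLast hLne) h rfl
      simp [this, hrh]
  exact hLlen ▸ le_lD (comp_mem_genSg hc hr) hcycle

end Tokens

theorem SimpleGraph.Walk.IsPath.exists_adj_ne_of_mem_support {V : Type*} {Γ : SimpleGraph V}
    {a b c : V} {p : Γ.Walk a b} (hp : p.IsPath) (hc : c ∈ p.support) (hca : c ≠ a)
    (hcb : c ≠ b) : ∃ d e, d ≠ e ∧ Γ.Adj c d ∧ Γ.Adj c e := by
  induction p with
  | nil => exact absurd (by simpa using hc) hca
  | @cons a w b had q ih =>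
    obtain ⟨hq, haq⟩ := (SimpleGraph.Walk.cons_isPath_iff had q).mp hp
    have hcq : c ∈ q.support := by simpa [hca] using hc
    by_cases hcw : c = w
    · subst hcw
      cases q with
      | nil => exact absurd rfl hcb
      | @cons _ t _ hct q' =>
        refine ⟨a, t, fun hat => haq ?_, had.symm, hct⟩
        simp [hat]
    · exact ih hq hcq hcw hcb

section Graph
variable {n : ℕ} {G : SimpleGraph (Fin n)}

open SimpleGraph

theorem exists_mem_genSg_of_walk {a b : Fin n} (p : G.Walk a b) (hab : a ≠ b) :
    ∃ f ∈ genSg (arcsOf G), f a = b ∧ f b = b ∧ ∀ z ∉ p.support, f z = z := by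
  induction p with
  | nil => exact absurd rfl hab
  | @cons a w b had q ih =>
    have harc : arcT a w ∈ genSg (arcsOf G) := arcT_mem_genSg had
    by_cases hwb : w = b
    · subst hwb
      exact ⟨arcT a w, harc, arcT_apply_self a w, arcT_apply_of_ne (Ne.symm hab),
        fun z hz => arcT_apply_of_ne (by rintro rfl; simp at hz)⟩
    · obtain ⟨f, hf, hfw, hfb, hfix⟩ := ih hwb
      refine ⟨f ∘ arcT a w, comp_mem_genSg harc hf, by simp [arcT_apply_self, hfw],
        by simp [arcT_apply_of_ne (Ne.symm hab), hfb], fun z hz => ?_⟩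
      rw [Walk.support_cons, List.mem_cons, not_or] at hz
      simp [arcT_apply_of_ne hz.1, hfix z hz.2]

theorem ncard_sub_one_le_lG {T : Set (Fin n)} (hT : 2 ≤ T.ncard)
    (hwalk : ∀ a ∈ T, ∀ b ∈ T, a ≠ b →
      ∃ p : G.Walk a b, ∀ z ∈ p.support, z ∈ T → z = a ∨ z = b) :
    T.ncard - 1 ≤ lG G := by
  refine ncard_sub_one_le_lD hT fun a ha b hb hab => ?_
  obtain ⟨p, hp⟩ := hwalk a ha b hb hab
  obtain ⟨f, hf, hfa, hfb, hfix⟩ := exists_mem_genSg_of_walk p hab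
  refine ⟨f, hf, hfa, fun z hz hza => ?_⟩
  by_cases hzp : z ∈ p.support
  · obtain rfl := (hp z hzp hz).resolve_left hza
    exact hfb
  · exact hfix z hzp

theorem ncard_neighborSet_sub_one_le_lG (v : Fin n) (hk : 2 ≤ (G.neighborSet v).ncard) :
    (G.neighborSet v).ncard - 1 ≤ lG G :=
  ncard_sub_one_le_lG hk fun a (ha : G.Adj v a) b (hb : G.Adj v b) _ =>
    ⟨.cons ha.symm (.cons hb .nil), by
    rintro z hz (hzv : G.Adj v z)
    simp only [Walk.support_cons, Walk.support_nil, List.mem_cons, List.not_mem_nil,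
      or_false] at hz
    rcases hz with rfl | rfl | rfl
    exacts [.inl rfl, (G.irrefl hzv).elim, .inr rfl]⟩

theorem ncard_leaves_sub_one_le_lG (H : G.Subgraph) (hH : H.coe.Preconnected)
    (hk : 2 ≤ {v | v ∈ H.verts ∧ (H.neighborSet v).ncard = 1}.ncard) :
    {v | v ∈ H.verts ∧ (H.neighborSet v).ncard = 1}.ncard - 1 ≤ lG G := by
  refine ncard_sub_one_le_lG hk fun a ha b hb _ => ?_
  obtain ⟨p, hp⟩ := (hH ⟨a, ha.1⟩ ⟨b, hb.1⟩).some.toPath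
  refine ⟨p.map H.hom, fun z hz hzT => ?_⟩
  -- `hz` mentions the endpoints `a`, `b` rather than `H.hom ⟨a, _⟩`, `H.hom ⟨b, _⟩`
  change z ∈ (p.map H.hom).support at hz
  rw [Walk.support_map, List.mem_map] at hz
  obtain ⟨c, hc, rfl⟩ := hz
  by_contra! hne
  obtain ⟨d, e, hde, hd, he⟩ := hp.exists_adj_ne_of_mem_support hc
    (fun h => hne.1 (congrArg Subtype.val h)) (fun h => hne.2 (congrArg Subtype.val h))
  have : 1 < (H.neighborSet c).ncard :=
    (Set.one_lt_ncard_iff (Set.toFinite _)).mpr ⟨d, e, hd, he, Subtype.val_injective.ne hde⟩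
  exact absurd hzT.2 this.ne'

end Graph

/-- (i) A vertex of degree `k ≥ 2` gives `l(G) ≥ k - 1`.
(ii) A subgraph which is a tree with `k ≥ 2` leaves gives `l(G) ≥ k - 1`. -/
theorem stmt4 (n : ℕ) (G : SimpleGraph (Fin n)) :
    (∀ (v : Fin n) (k : ℕ), 2 ≤ k → (G.neighborSet v).ncard = k → k - 1 ≤ lG G) ∧
    (∀ (H : G.Subgraph) (k : ℕ), 2 ≤ k → H.coe.IsTree →
      { v : Fin n | v ∈ H.verts ∧ (H.neighborSet v).ncard = 1 }.ncard = k →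
      k - 1 ≤ lG G) := by
  refine ⟨fun v k hk hdeg => ?_, fun H k hk htree hleaves => ?_⟩
  · subst hdeg
    exact ncard_neighborSet_sub_one_le_lG v hk
  · subst hleaves
    exact ncard_leaves_sub_one_le_lG H htree.connected.preconnected hk
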